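/- arXiv:math/0508622 — 5 statements merged into one kernel-verified Lean document; each statement's English description precedes it below -/
import Mathlib

section
/- In the Weyl algebra D_n over ℂ, if M is a left D_n-module, m ∈ M, f is a polynomial (order-zero operator), and f·(P·m) = 0 for some P ∈ D_n, then for every operator Q ∈ D_n of order k one has f^(k+1)·(Q·(P·m)) = 0. -/
/-- Defining relations of the `n`-th Weyl algebra: `[x_i,x_j]=0`, `[∂_i,∂_j]=0`,
`[∂_i,x_j]=δ_{ij}`. -/
inductive WeylRel (n : ℕ) :
    FreeAlgebra ℂ (Fin n ⊕ Fin n) → FreeAlgebra ℂ (Fin n ⊕ Fin n) → Prop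
  | xx (i j : Fin n) : WeylRel n
      (FreeAlgebra.ι ℂ (Sum.inl i) * FreeAlgebra.ι ℂ (Sum.inl j))
      (FreeAlgebra.ι ℂ (Sum.inl j) * FreeAlgebra.ι ℂ (Sum.inl i))
  | dd (i j : Fin n) : WeylRel n
      (FreeAlgebra.ι ℂ (Sum.inr i) * FreeAlgebra.ι ℂ (Sum.inr j))
      (FreeAlgebra.ι ℂ (Sum.inr j) * FreeAlgebra.ι ℂ (Sum.inr i))
  | dx (i j : Fin n) : WeylRel n
      (FreeAlgebra.ι ℂ (Sum.inr i) * FreeAlgebra.ι ℂ (Sum.inl j))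
      (FreeAlgebra.ι ℂ (Sum.inl j) * FreeAlgebra.ι ℂ (Sum.inr i) +
        (if i = j then 1 else 0))

/-- The `n`-th Weyl algebra `D_n = ℂ⟨x_1,…,x_n,∂_1,…,∂_n⟩`. -/
abbrev Weyl (n : ℕ) := RingQuot (WeylRel n)

/-- The operator `x_i` of multiplication by the `i`-th variable. -/
noncomputable def xop (n : ℕ) (i : Fin n) : Weyl n :=
  RingQuot.mkAlgHom ℂ (WeylRel n) (FreeAlgebra.ι ℂ (Sum.inl i))

/-- The partial differentiation operator `∂_i`. -/
noncomputable def dop (n : ℕ) (i : Fin n) : Weyl n :=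
  RingQuot.mkAlgHom ℂ (WeylRel n) (FreeAlgebra.ι ℂ (Sum.inr i))


/-- The polynomial subalgebra `ℂ[x_1,…,x_n] ⊆ D_n`. -/
noncomputable def polySub (n : ℕ) : Subalgebra ℂ (Weyl n) :=
  Algebra.adjoin ℂ (Set.range (xop n))

/-- `OrdLE n k Q`: the operator `Q ∈ D_n` has order at most `k`, defined inductively via
commutators: order-zero operators are those commuting with every polynomial, and `Q` has
order `≤ k+1` if `[f,Q]` has order `≤ k` for every polynomial `f`. -/
inductive OrdLE (n : ℕ) : ℕ → Weyl n → Prop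
  | base (Q : Weyl n) (h : ∀ f ∈ polySub n, f * Q = Q * f) : OrdLE n 0 Q
  | step (k : ℕ) (Q : Weyl n) (h : ∀ f ∈ polySub n, OrdLE n k (f * Q - Q * f)) :
      OrdLE n (k + 1) Q

/-- in the Weyl algebra `D_n` over `ℂ`, if `M` is a left `D_n`-module,
`m ∈ M`, `f` is a polynomial (an order-zero operator), and `f·(P·m) = 0` for some
`P ∈ D_n`, then for every operator `Q ∈ D_n` of order `k` one has
`f^(k+1)·(Q·(P·m)) = 0`. -/
theorem pow_smul_eq_zero_of_order {n : ℕ} (M : Type*) [AddCommGroup M]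
    [Module (Weyl n) M] (m : M) (P f : Weyl n)
    (hf : f ∈ polySub n)
    (hfPm : (f * P) • m = 0)
    (Q : Weyl n) (k : ℕ) (hQ : OrdLE n k Q) :
    (f ^ (k + 1) * (Q * P)) • m = 0 := by
  induction hQ with
  | base Q h =>
    have key : f ^ (0 + 1) * (Q * P) = Q * (f * P) := by
      rw [pow_one, ← mul_assoc, h f hf, mul_assoc]
    rw [key, mul_smul, hfPm, smul_zero]
  | step k Q h ih =>
    have key : f ^ (k + 1 + 1) * (Q * P) =
        f ^ (k + 1) * ((f * Q - Q * f) * P) + (f ^ (k + 1) * Q) * (f * P) := by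
      simp only [sub_mul, mul_sub, mul_assoc, pow_succ]
      abel
    rw [key, add_smul, ih f hf, mul_smul, hfPm, smul_zero, add_zero]
end

section
/- Let A be a finite subset of ℤ^d and F ⊆ A a subset. Then the simplicial volume of F (computed in the lattice ℤF it spans) does not exceed the simplicial volume of A (computed in ℤA). -/
open MeasureTheory

/-- The simplicial volume of a finite set `G ⊆ ℤ^d`: the Euclidean volume of the convex hull
of `G ∪ {0}`, computed in coordinates given by a basis of the lattice `ℤG` spanned by `G`,
normalized by the volume `1/r!` of the standard `r`-simplex (`r = rank ℤG`). -/
noncomputable def simpVol {d : ℕ} (G : Finset (Fin d → ℤ)) : ℝ :=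
  haveI : Module.Finite ℤ (Submodule.span ℤ ((G : Set (Fin d → ℤ)))) :=
    Module.Finite.span_of_finite ℤ G.finite_toSet
  let L : Submodule ℤ (Fin d → ℤ) := Submodule.span ℤ ((G : Set (Fin d → ℤ)))
  let b := Module.Free.chooseBasis ℤ L
  let coord : (Fin d → ℤ) → (Module.Free.ChooseBasisIndex ℤ L → ℝ) :=
    fun v => haveI := Classical.dec (v ∈ L)
      if h : v ∈ L then (fun i => ((b.repr ⟨v, h⟩) i : ℝ)) else 0
  (Nat.factorial (Module.finrank ℤ L)) *
    (volume (convexHull ℝ (coord '' (insert (0 : Fin d → ℤ) (G : Set (Fin d → ℤ)))))).toReal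

/-!
Adjoin the points of `A \ F` one at a time; it suffices that adjoining a point `a` to `F` does
not decrease the simplicial volume. Let `L = ℤF` have rank `r` and `L' = ℤ(F ∪ {a})`.

If some nonzero multiple of `a` lies in `L`, then `L'` has rank `r` as well. The coordinates with
respect to bases of `L` and `L'` differ by an integer matrix with nonzero determinant, so passing
to `L'` multiplies volumes by a factor at least `1`, and adjoining `a` only enlarges the hull.

Otherwise, a basis of `L` extended by `a` is a basis of `L'`. In these coordinates the new hull is
the pyramid of height `1` over the old hull, whose volume is `1/(r+1)` times the old volume;
this is exactly compensated by the normalisation `(r+1)!` in place of `r!`.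
-/

open Module Set Submodule Matrix Pointwise

section Pyramid

variable {E : Type*} [NormedAddCommGroup E] [NormedSpace ℝ E]

/-- The pyramid with apex `(1, 0)` over the base `{0} × B`. -/
def pyramid (B : Set E) : Set (ℝ × E) :=
  (fun p : ℝ × E => (1 - p.1, p.1 • p.2)) '' Icc 0 1 ×ˢ B

lemma convexHull_insert_eq_pyramid {S : Set E} (hS : S.Nonempty) :
    convexHull ℝ (insert ((1 : ℝ), (0 : E)) ((fun x => ((0 : ℝ), x)) '' S)) =
      pyramid (convexHull ℝ S) := by
  have hinr : (fun x => ((0 : ℝ), x)) = LinearMap.inr ℝ ℝ E := rfl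
  rw [convexHull_insert (hS.image _), hinr, ← LinearMap.image_convexHull,
    convexJoin_singleton_left]
  ext p
  simp only [pyramid, segment_eq_image, mem_iUnion, mem_image, mem_prod, exists_prop,
    LinearMap.inr_apply, Prod.exists, Prod.mk.injEq]
  constructor
  · rintro ⟨_, _, ⟨y, hy, rfl, rfl⟩, θ, hθ, rfl⟩
    exact ⟨θ, y, ⟨hθ, hy⟩, by simp⟩
  · rintro ⟨θ, y, ⟨hθ, hy⟩, rfl⟩
    exact ⟨0, y, ⟨y, hy, rfl, rfl⟩, θ, hθ, by simp⟩

lemma preimage_mk_pyramid (B : Set E) (t : ℝ) :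
    Prod.mk t ⁻¹' pyramid B = if t ∈ Icc 0 1 then (1 - t) • B else ∅ := by
  ext x
  simp only [pyramid, mem_preimage, mem_image, mem_prod, Prod.mk.injEq, Prod.exists]
  split_ifs with ht
  · rw [mem_smul_set]
    constructor
    · rintro ⟨θ, y, ⟨-, hy⟩, hθ, rfl⟩
      exact ⟨y, hy, by rw [← hθ, sub_sub_cancel]⟩
    · rintro ⟨y, hy, rfl⟩
      exact ⟨1 - t, y, ⟨⟨by linarith [ht.2], by linarith [ht.1]⟩, hy⟩, sub_sub_cancel 1 t, rfl⟩
  · refine iff_of_false ?_ (notMem_empty x)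
    rintro ⟨θ, y, ⟨hθ, -⟩, rfl, -⟩
    exact ht ⟨by linarith [hθ.2], by linarith [hθ.1]⟩

lemma IsCompact.pyramid {B : Set E} (hB : IsCompact B) : IsCompact (pyramid B) :=
  (isCompact_Icc.prod hB).image (by fun_prop)

lemma lintegral_one_sub_pow (n : ℕ) :
    ∫⁻ t in Icc (0 : ℝ) 1, ENNReal.ofReal ((1 - t) ^ n) = ENNReal.ofReal (1 / (n + 1)) := by
  rw [← ofReal_integral_eq_lintegral_ofReal]
  · congr 1
    rw [integral_Icc_eq_integral_Ioc, ← intervalIntegral.integral_of_le zero_le_one,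
      intervalIntegral.integral_comp_sub_left (fun u : ℝ => u ^ n) 1]
    simp [integral_pow]
  · exact (by fun_prop : Continuous fun t : ℝ => (1 - t) ^ n).integrableOn_Icc
  · filter_upwards [ae_restrict_mem measurableSet_Icc] with t ht
    have : 0 ≤ 1 - t := by linarith [ht.2]
    positivity

variable [MeasurableSpace E] [BorelSpace E] [FiniteDimensional ℝ E]

lemma volume_prod_pyramid (μ : Measure E) [μ.IsAddHaarMeasure] {B : Set E} (hB : IsCompact B) :
    (volume.prod μ) (pyramid B) = ENNReal.ofReal (1 / (finrank ℝ E + 1)) * μ B := by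
  have hslice : ∀ t, μ (Prod.mk t ⁻¹' pyramid B) =
      (Icc 0 1).indicator (fun t => ENNReal.ofReal ((1 - t) ^ finrank ℝ E) * μ B) t := by
    intro t
    rw [preimage_mk_pyramid]
    split_ifs with ht
    · rw [indicator_of_mem ht, Measure.addHaar_smul_of_nonneg μ (sub_nonneg.2 ht.2)]
    · rw [indicator_of_notMem ht, measure_empty]
  rw [Measure.prod_apply hB.pyramid.isClosed.measurableSet]
  simp_rw [hslice]
  rw [lintegral_indicator measurableSet_Icc, lintegral_mul_const _ (by fun_prop),
    lintegral_one_sub_pow]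

end Pyramid

lemma volume_convexHull_insert_finCons {n : ℕ} {S : Set (Fin n → ℝ)} (hS : S.Finite)
    (hne : S.Nonempty) :
    volume (convexHull ℝ (insert (Fin.cons 1 0 : Fin (n + 1) → ℝ)
      ((fun x => (Fin.cons 0 x : Fin (n + 1) → ℝ)) '' S))) =
      ENNReal.ofReal (1 / (n + 1)) * volume (convexHull ℝ S) := by
  let Φ := Fin.consLinearEquiv ℝ (fun _ : Fin (n + 1) => ℝ)
  have hΦ : ⇑Φ = (MeasurableEquiv.piFinSuccAbove (fun _ => ℝ) 0).symm := by
    funext p i; simp [Φ]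
  have himage : insert (Fin.cons 1 0 : Fin (n + 1) → ℝ)
      ((fun x => (Fin.cons 0 x : Fin (n + 1) → ℝ)) '' S) =
      Φ.toLinearMap '' insert ((1 : ℝ), (0 : Fin n → ℝ)) ((fun x => ((0 : ℝ), x)) '' S) := by
    rw [image_insert_eq, image_image]; rfl
  rw [himage, ← LinearMap.image_convexHull, convexHull_insert_eq_pyramid hne, LinearEquiv.coe_coe,
    hΦ, MeasurableEquiv.image_symm,
    (volume_preserving_piFinSuccAbove (fun _ => ℝ) 0).measure_preimage_equiv,
    Measure.volume_eq_prod, volume_prod_pyramid _ (hS.isCompact_convexHull ℝ), finrank_fin_fun]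

section LatticeCoord

variable {M : Type*} [AddCommGroup M] {L L' : Submodule ℤ M} {ι ι' : Type*}

/-- The coordinate map `coord` in the definition of `simpVol`, for an arbitrary basis. -/
noncomputable def latticeCoord (b : Basis ι ℤ L) (v : M) : ι → ℝ :=
  haveI := Classical.dec (v ∈ L)
  if h : v ∈ L then fun i => (b.repr ⟨v, h⟩ i : ℝ) else 0

lemma latticeCoord_of_mem (b : Basis ι ℤ L) {v : M} (hv : v ∈ L) :
    latticeCoord b v = fun i => (b.repr ⟨v, hv⟩ i : ℝ) :=
  dif_pos hv

lemma latticeCoord_reindex (b : Basis ι ℤ L) (e : ι ≃ ι') (v : M) :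
    latticeCoord (b.reindex e) v = latticeCoord b v ∘ e.symm := by
  by_cases hv : v ∈ L
  · simp [latticeCoord_of_mem _ hv, Function.comp_def]
  · simp [latticeCoord, hv]

lemma volume_convexHull_latticeCoord_reindex [Fintype ι] [Fintype ι'] (b : Basis ι ℤ L)
    (e : ι ≃ ι') (X : Set M) :
    volume (convexHull ℝ (latticeCoord (b.reindex e) '' X)) =
      volume (convexHull ℝ (latticeCoord b '' X)) := by
  have himage : latticeCoord (b.reindex e) '' X =
      LinearMap.funLeft ℝ ℝ e.symm '' (latticeCoord b '' X) := by
    rw [image_image]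
    simp_rw [latticeCoord_reindex]
    rfl
  have hcoe : ⇑(LinearMap.funLeft ℝ ℝ e.symm) = MeasurableEquiv.piCongrLeft (fun _ => ℝ) e := by
    funext x j
    simp [MeasurableEquiv.coe_piCongrLeft, Equiv.piCongrLeft_apply]
  rw [himage, ← LinearMap.image_convexHull, hcoe, MeasurableEquiv.image_eq_preimage_symm,
    ((volume_measurePreserving_piCongrLeft (fun _ => ℝ) e).symm _).measure_preimage_equiv]

lemma latticeCoord_eq_mulVec [Fintype ι] [Fintype ι'] [DecidableEq ι] (h : L ≤ L')
    (b : Basis ι ℤ L) (b' : Basis ι' ℤ L') {v : M} (hv : v ∈ L) :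
    latticeCoord b' v = (LinearMap.toMatrix b b' (Submodule.inclusion h)).map (Int.cast : ℤ → ℝ) *ᵥ
      latticeCoord b v := by
  rw [latticeCoord_of_mem b' (h hv), latticeCoord_of_mem b hv]
  funext i
  have := congrArg (fun x => (x i : ℝ))
    (LinearMap.toMatrix_mulVec_repr b b' (Submodule.inclusion h) ⟨v, hv⟩)
  exact this.symm.trans ((Int.castRingHom ℝ).map_mulVec _ _ i)

lemma det_toMatrix_inclusion_ne_zero [Fintype ι] [DecidableEq ι] (h : L ≤ L')
    (b : Basis ι ℤ L) (b' : Basis ι ℤ L') :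
    (LinearMap.toMatrix b b' (Submodule.inclusion h)).det ≠ 0 := by
  rw [Ne, ← Matrix.exists_mulVec_eq_zero_iff]
  rintro ⟨x, hx0, hx⟩
  set y := b.equivFun.symm x
  have hrepr : ⇑(b.repr y) = x := by rw [← b.equivFun_apply, b.equivFun.apply_symm_apply]
  have hy : Submodule.inclusion h y = 0 := by
    apply b'.equivFun.injective
    rw [map_zero, Basis.equivFun_apply, ← LinearMap.toMatrix_mulVec_repr b b', hrepr, hx]
  apply hx0
  rw [← hrepr, Submodule.inclusion_injective h (hy.trans (map_zero _).symm)]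
  simp

lemma volume_convexHull_latticeCoord_le [Fintype ι] (h : L ≤ L') (b : Basis ι ℤ L)
    (b' : Basis ι ℤ L') {X : Set M} (hX : X ⊆ L) :
    volume (convexHull ℝ (latticeCoord b '' X)) ≤ volume (convexHull ℝ (latticeCoord b' '' X)) := by
  classical
  set T := (LinearMap.toMatrix b b' (Submodule.inclusion h)).map (Int.cast : ℤ → ℝ)
  have himage : latticeCoord b' '' X = Matrix.toLin' T '' (latticeCoord b '' X) := by
    rw [image_image]
    exact image_congr fun v hv => by rw [Matrix.toLin'_apply, latticeCoord_eq_mulVec h b b' (hX hv)]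
  have hdet : 1 ≤ |LinearMap.det (Matrix.toLin' T)| := by
    rw [LinearMap.det_toLin', show T.det = _ from ((Int.castRingHom ℝ).map_det _).symm, eq_intCast]
    exact_mod_cast Int.one_le_abs (det_toMatrix_inclusion_ne_zero h b b')
  rw [himage, ← LinearMap.image_convexHull, Measure.addHaar_image_linearMap]
  exact le_mul_of_one_le_left zero_le (ENNReal.one_le_ofReal.2 hdet)

end LatticeCoord

section mkFinConsOfLE

variable {M : Type*} [AddCommGroup M] {n : ℕ} {N O : Submodule ℤ M} {y : M} (yO : y ∈ O)
  (b : Basis (Fin n) ℤ N) (hNO : N ≤ O) (hli : ∀ c : ℤ, ∀ x ∈ N, c • y + x = 0 → c = 0)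
  (hsp : ∀ z ∈ O, ∃ c : ℤ, z + c • y ∈ N)

lemma latticeCoord_mkFinConsOfLE_self :
    latticeCoord (Basis.mkFinConsOfLE y yO b hNO hli hsp) y = Fin.cons 1 0 := by
  have hy : (⟨y, yO⟩ : O) = Basis.mkFinConsOfLE y yO b hNO hli hsp 0 := by
    rw [Basis.coe_mkFinConsOfLE, Fin.cons_zero]
  rw [latticeCoord_of_mem _ yO, hy, Basis.repr_self]
  funext i
  cases i using Fin.cases <;> simp

lemma latticeCoord_mkFinConsOfLE_of_mem {z : M} (hz : z ∈ N) :
    latticeCoord (Basis.mkFinConsOfLE y yO b hNO hli hsp) z = Fin.cons 0 (latticeCoord b z) := by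
  set b' := Basis.mkFinConsOfLE y yO b hNO hli hsp
  have hz' : (⟨z, hNO hz⟩ : O) =
      ∑ j, (Fin.cons 0 ⇑(b.repr ⟨z, hz⟩) : Fin (n + 1) → ℤ) j • b' j := by
    rw [Fin.sum_univ_succ]
    simp only [Fin.cons_zero, zero_smul, zero_add, Fin.cons_succ, b', Basis.coe_mkFinConsOfLE,
      Function.comp_apply, ← map_smul, ← map_sum, b.sum_repr]
    rfl
  rw [latticeCoord_of_mem _ (hNO hz), latticeCoord_of_mem _ hz, hz', b'.repr_sum_self]
  funext i
  cases i using Fin.cases <;> simp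

end mkFinConsOfLE

lemma finrank_span_insert_eq_of_smul_mem {M : Type*} [AddCommGroup M] [IsTorsionFree ℤ M]
    {s : Set M} {a : M} {c : ℤ} (hc : c ≠ 0) (hca : c • a ∈ span ℤ s) :
    finrank ℤ (span ℤ (insert a s)) = finrank ℤ (span ℤ s) := by
  have hmul : ∀ x : span ℤ (insert a s), c • (x : M) ∈ span ℤ s := by
    rintro ⟨x, hx⟩
    obtain ⟨k, y, hy, rfl⟩ := mem_span_insert.1 hx
    rw [smul_add, smul_comm]
    exact add_mem (smul_mem _ _ hca) (smul_mem _ _ hy)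
  let f : span ℤ (insert a s) →ₗ[ℤ] span ℤ s :=
    LinearMap.codRestrict _ (c • (span ℤ (insert a s)).subtype) hmul
  have hf : Function.Injective f := fun x y hxy =>
    Subtype.ext (smul_right_injective M hc (congrArg Subtype.val hxy))
  exact congrArg Cardinal.toNat <| le_antisymm (LinearMap.rank_le_of_injective f hf)
    (rank_mono (span_mono (subset_insert a s)))

section SimpVol

variable {d : ℕ}

lemma simpVol_eq_of_basis (G : Finset (Fin d → ℤ)) {ι : Type*} [Fintype ι]
    (c : Basis ι ℤ (span ℤ (G : Set (Fin d → ℤ)))) :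
    simpVol G = (Fintype.card ι).factorial *
      (volume (convexHull ℝ (latticeCoord c '' insert 0 (G : Set (Fin d → ℤ))))).toReal := by
  let b := Free.chooseBasis ℤ (span ℤ (G : Set (Fin d → ℤ)))
  let e : Free.ChooseBasisIndex ℤ (span ℤ (G : Set (Fin d → ℤ))) ≃ ι := Fintype.equivOfCardEq <| by
    rw [← finrank_eq_card_chooseBasisIndex, finrank_eq_card_basis c]
  have hX : insert 0 (G : Set (Fin d → ℤ)) ⊆ span ℤ (G : Set (Fin d → ℤ)) :=
    insert_subset (zero_mem _) subset_span
  have hvol : volume (convexHull ℝ (latticeCoord b '' insert 0 (G : Set (Fin d → ℤ)))) =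
      volume (convexHull ℝ (latticeCoord c '' insert 0 (G : Set (Fin d → ℤ)))) := by
    rw [← volume_convexHull_latticeCoord_reindex b e]
    exact le_antisymm (volume_convexHull_latticeCoord_le le_rfl _ _ hX)
      (volume_convexHull_latticeCoord_le le_rfl _ _ hX)
  rw [← finrank_eq_card_basis c, ← hvol]
  rfl

lemma simpVol_le_of_finrank_eq {F G : Finset (Fin d → ℤ)} (hFG : F ⊆ G)
    (hr : finrank ℤ (span ℤ (F : Set (Fin d → ℤ))) = finrank ℤ (span ℤ (G : Set (Fin d → ℤ)))) :
    simpVol F ≤ simpVol G := by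
  let b := finBasisOfFinrankEq ℤ (span ℤ (F : Set (Fin d → ℤ))) hr
  let b' := finBasis ℤ (span ℤ (G : Set (Fin d → ℤ)))
  have hFG' : insert 0 (F : Set (Fin d → ℤ)) ⊆ insert 0 (G : Set (Fin d → ℤ)) :=
    insert_subset_insert (Finset.coe_subset.2 hFG)
  rw [simpVol_eq_of_basis F b, simpVol_eq_of_basis G b']
  refine mul_le_mul_of_nonneg_left (ENNReal.toReal_mono ?_ ?_) (by positivity)
  · exact ((G.finite_toSet.insert 0).image _ |>.isCompact_convexHull ℝ).measure_lt_top.ne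
  · calc volume (convexHull ℝ (latticeCoord b '' insert 0 (F : Set (Fin d → ℤ))))
        ≤ volume (convexHull ℝ (latticeCoord b' '' insert 0 (F : Set (Fin d → ℤ)))) :=
          volume_convexHull_latticeCoord_le (span_mono (Finset.coe_subset.2 hFG)) b b'
            (insert_subset (zero_mem _) subset_span)
      _ ≤ _ := measure_mono (convexHull_mono (image_mono hFG'))

lemma simpVol_insert_eq_of_forall_smul_notMem {F : Finset (Fin d → ℤ)} {a : Fin d → ℤ}
    (ha : ∀ c : ℤ, c ≠ 0 → c • a ∉ span ℤ (F : Set (Fin d → ℤ))) :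
    simpVol (insert a F) = simpVol F := by
  set L := span ℤ (F : Set (Fin d → ℤ))
  set L' := span ℤ ((insert a F : Finset (Fin d → ℤ)) : Set (Fin d → ℤ))
  have hLL' : L ≤ L' := span_mono (by simp)
  have haL' : a ∈ L' := subset_span (by simp)
  have hli : ∀ c : ℤ, ∀ x ∈ L, c • a + x = 0 → c = 0 := by
    intro c x hx hcx
    by_contra hc
    exact ha c hc (by rw [eq_neg_of_add_eq_zero_left hcx]; exact neg_mem hx)
  have hsp : ∀ z ∈ L', ∃ c : ℤ, z + c • a ∈ L := by
    intro z hz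
    have hz' : z ∈ span ℤ (insert a (F : Set (Fin d → ℤ))) := by rwa [← Finset.coe_insert]
    obtain ⟨c, x, hx, rfl⟩ := mem_span_insert.1 hz'
    exact ⟨-c, by rwa [neg_smul, add_neg_cancel_comm]⟩
  let b := finBasis ℤ L
  let b' := Basis.mkFinConsOfLE a haL' b hLL' hli hsp
  have hX : insert 0 (F : Set (Fin d → ℤ)) ⊆ L := insert_subset (zero_mem _) subset_span
  have himage : latticeCoord b' '' insert 0 ((insert a F : Finset (Fin d → ℤ)) : Set (Fin d → ℤ)) =
      insert (Fin.cons 1 0)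
        ((fun x => Fin.cons 0 x) '' (latticeCoord b '' insert 0 (F : Set (Fin d → ℤ)))) := by
    rw [Finset.coe_insert, insert_comm, image_insert_eq, latticeCoord_mkFinConsOfLE_self,
      image_image]
    exact congrArg _ (image_congr fun z hz => latticeCoord_mkFinConsOfLE_of_mem _ _ _ _ _ (hX hz))
  rw [simpVol_eq_of_basis _ b', simpVol_eq_of_basis _ b, himage,
    volume_convexHull_insert_finCons ((F.finite_toSet.insert 0).image _) (by simp),
    ENNReal.toReal_mul, ENNReal.toReal_ofReal (by positivity), Fintype.card_fin, Fintype.card_fin,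
    Nat.factorial_succ]
  push_cast
  field_simp

lemma simpVol_le_simpVol_insert (F : Finset (Fin d → ℤ)) (a : Fin d → ℤ) :
    simpVol F ≤ simpVol (insert a F) := by
  by_cases ha : ∃ c : ℤ, c ≠ 0 ∧ c • a ∈ span ℤ (F : Set (Fin d → ℤ))
  · obtain ⟨c, hc, hca⟩ := ha
    refine simpVol_le_of_finrank_eq (F.subset_insert a) ?_
    rw [Finset.coe_insert, finrank_span_insert_eq_of_smul_mem hc hca]
  · simp only [not_exists, not_and] at ha
    exact (simpVol_insert_eq_of_forall_smul_notMem ha).ge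

end SimpVol

/-- If `F ⊆ A` are finite subsets of `ℤ^d`, then the simplicial volume of `F`
(computed in the lattice `ℤF`) does not exceed the simplicial volume of `A`
(computed in `ℤA`). -/
theorem simpVol_mono_of_subset {d : ℕ} (A F : Finset (Fin d → ℤ)) (hFA : F ⊆ A) :
    simpVol F ≤ simpVol A := by
  have hle_union : ∀ s : Finset (Fin d → ℤ), simpVol F ≤ simpVol (s ∪ F) := by
    intro s
    induction s using Finset.induction_on with
    | empty => rw [Finset.empty_union]
    | insert a s _ ih =>
      rw [Finset.insert_union]
      exact ih.trans (simpVol_le_simpVol_insert _ a)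
  simpa [Finset.union_eq_left.2 hFA] using hle_union A
end

section
/- Let A ⊆ ℤ^d be a finite set such that the semigroup ℕA generates ℤ^d as a group. Then for any β, γ ∈ ℤ^d, the intersection (β + ℕA) ∩ (γ + ℕA) contains a translated copy γ'' + ℕA of the semigroup for some γ'' ∈ ℤ^d. -/
open scoped Pointwise

theorem AddSubgroup.exists_sub_eq_of_mem_closure {G : Type*} [AddCommGroup G] {S : Set G} {x : G}
    (hx : x ∈ AddSubgroup.closure S) :
    ∃ a ∈ AddSubmonoid.closure S, ∃ b ∈ AddSubmonoid.closure S, a - b = x := by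
  rw [← AddSubgroup.mem_toAddSubmonoid, AddSubgroup.closure_toAddSubmonoid,
    AddSubmonoid.closure_union, AddSubmonoid.mem_sup] at hx
  obtain ⟨a, ha, c, hc, rfl⟩ := hx
  refine ⟨a, ha, -c, ?_, sub_neg_eq_add a c⟩
  rwa [← AddSubmonoid.mem_neg, ← AddSubmonoid.closure_neg]

theorem AddSubmonoid.vadd_add_vadd_subset {G : Type*} [AddMonoid G] {M : AddSubmonoid G}
    {a : G} (ha : a ∈ M) (x : G) : (x + a) +ᵥ (M : Set G) ⊆ x +ᵥ (M : Set G) := by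
  rintro _ ⟨m, hm, rfl⟩
  exact ⟨a + m, add_mem ha hm, (add_assoc x a m).symm⟩

/-- if `A ⊆ ℤ^d` is finite and the semigroup `ℕA` generates `ℤ^d` as a group,
then for any `β, γ ∈ ℤ^d` the intersection `(β + ℕA) ∩ (γ + ℕA)` contains a translate
`γ'' + ℕA` of the semigroup. -/
theorem exists_translate_subset_inter {d : ℕ} (A : Finset (Fin d → ℤ))
    (hZA : AddSubgroup.closure (A : Set (Fin d → ℤ)) = ⊤)
    (β γ : Fin d → ℤ) :
    ∃ γ'' : Fin d → ℤ,
      γ'' +ᵥ ((AddSubmonoid.closure (A : Set (Fin d → ℤ)) : Set (Fin d → ℤ))) ⊆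
        (β +ᵥ ((AddSubmonoid.closure (A : Set (Fin d → ℤ)) : Set (Fin d → ℤ)))) ∩
        (γ +ᵥ ((AddSubmonoid.closure (A : Set (Fin d → ℤ)) : Set (Fin d → ℤ)))) := by
  obtain ⟨a, ha, b, hb, hab⟩ :=
    AddSubgroup.exists_sub_eq_of_mem_closure (hZA ▸ AddSubgroup.mem_top (γ - β))
  have hcommon : β + a = γ + b := (add_comm β a).trans (sub_eq_sub_iff_add_eq_add.mp hab)
  refine ⟨β + a, Set.subset_inter (AddSubmonoid.vadd_add_vadd_subset ha β) ?_⟩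
  rw [hcommon]
  exact AddSubmonoid.vadd_add_vadd_subset hb γ
end

section
/- Let A be a d×n integer matrix with pointed semigroup ℕA. The ℤ^d-graded prime ideals of R_A = ℂ[∂_1,…,∂_n] that contain the toric ideal I_A are exactly the ideals I_A^F = ⟨∂_k : a_k ∉ F⟩ + R_A·I_F, where F runs over the prime faces of A (zero sets in A of linear functionals nonnegative on ℕA), and I_F is the toric ideal of F in ℂ[∂_k : a_k ∈ F]. Moreover R_A/I_A^F ≅ R_F/I_F. -/
/-!
Let `φ_F` send `∂_j` to `t^{a_j}` for `j ∈ F` and to `0` otherwise. Its kernel is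
`I_A^F`, which is therefore prime and graded, with quotient `R_F/I_F`. If a functional `L ≥ 0`
cuts out `F`, then `φ_F` is the toric map followed by discarding the degrees with `L ≠ 0`, so
`I_A ⊆ I_A^F`.

Conversely, for a graded prime `P ⊇ I_A` put `F = {k | ∂_k ∉ P}`, so that `I_A^F ⊆ P`. The
binomials of `I_A` show that an integer relation `∑ z_k a_k = 0` with `z_k ≥ 0` off `F` vanishes
off `F`; by Gordan's theorem (Hahn–Banach in `ℝ^d`, then rational approximation) `F` is cut out by
an integral functional. Finally a homogeneous `q ∈ P` has `φ_F q = s t^g`; if `s ≠ 0`, some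
monomial `∂^u` of `q` lies over `F` and `q - s ∂^u ∈ ker φ_F ⊆ P` puts `∂^u` into `P`, which is
impossible. Hence `P ⊆ I_A^F`.
-/

open MvPolynomial

variable {d n : ℕ}

def degA (A : Matrix (Fin d) (Fin n) ℤ) (u : Fin n →₀ ℕ) : Fin d → ℤ :=
  fun i => -(∑ j, A i j * (u j : ℤ))

noncomputable def homogComponentA (A : Matrix (Fin d) (Fin n) ℤ)
    (δ : Fin d → ℤ) (p : MvPolynomial (Fin n) ℂ) : MvPolynomial (Fin n) ℂ :=
  haveI := Classical.decEq (Fin d → ℤ)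
  ∑ u ∈ p.support.filter (fun u => degA A u = δ), MvPolynomial.monomial u (p.coeff u)

def IsGradedIdeal (A : Matrix (Fin d) (Fin n) ℤ) (J : Ideal (MvPolynomial (Fin n) ℂ)) :
    Prop :=
  ∀ p ∈ J, ∀ δ : Fin d → ℤ, homogComponentA A δ p ∈ J

noncomputable def toricIdeal (A : Matrix (Fin d) (Fin n) ℤ) :
    Ideal (MvPolynomial (Fin n) ℂ) :=
  RingHom.ker (MvPolynomial.aeval
      (fun j : Fin n => (AddMonoidAlgebra.single (fun i : Fin d => A i j) (1 : ℂ) :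
        AddMonoidAlgebra ℂ (Fin d → ℤ))) :
      MvPolynomial (Fin n) ℂ →ₐ[ℂ] AddMonoidAlgebra ℂ (Fin d → ℤ)).toRingHom

def IsPrimeFaceIdx (A : Matrix (Fin d) (Fin n) ℤ) (F : Finset (Fin n)) : Prop :=
  ∃ L : (Fin d → ℤ) →ₗ[ℤ] ℤ,
    (∀ k : Fin n, 0 ≤ L (fun i => A i k)) ∧
    (∀ k : Fin n, k ∈ F ↔ L (fun i => A i k) = 0)

noncomputable def faceToricIdeal (A : Matrix (Fin d) (Fin n) ℤ) (F : Finset (Fin n)) :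
    Ideal (MvPolynomial {k : Fin n // k ∈ F} ℂ) :=
  RingHom.ker (MvPolynomial.aeval
      (fun k : {k : Fin n // k ∈ F} =>
        (AddMonoidAlgebra.single (fun i : Fin d => A i k.1) (1 : ℂ) :
          AddMonoidAlgebra ℂ (Fin d → ℤ))) :
      MvPolynomial {k : Fin n // k ∈ F} ℂ →ₐ[ℂ] AddMonoidAlgebra ℂ (Fin d → ℤ)).toRingHom

noncomputable def facePrimeIdeal (A : Matrix (Fin d) (Fin n) ℤ) (F : Finset (Fin n)) :
    Ideal (MvPolynomial (Fin n) ℂ) :=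
  Ideal.span ((fun k : Fin n => (MvPolynomial.X k : MvPolynomial (Fin n) ℂ)) ''
      {k : Fin n | k ∉ F}) ⊔
    Ideal.map (MvPolynomial.rename (Subtype.val : {k : Fin n // k ∈ F} → Fin n))
      (faceToricIdeal A F)

theorem exists_ratCast_mem_of_isOpen {ι : Type*} [Fintype ι] {x : ι → ℝ} {U : Set (ι → ℝ)}
    (hU : IsOpen U) (hxU : x ∈ U) :
    ∃ q : ι → ℚ, (fun i => (q i : ℝ)) ∈ U ∧
      ∀ w : ι → ℚ, (fun i => (w i : ℝ)) ⬝ᵥ x = 0 → w ⬝ᵥ q = 0 := by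
  -- The coordinates of `x` in a `ℚ`-basis of the `ℚ`-span of its entries are rational vectors
  -- satisfying every rational relation of `x`; approximate the real coefficients that combine
  -- them into `x` by rational ones.
  let V := Submodule.span ℚ (Set.range x)
  have : FiniteDimensional ℚ V := FiniteDimensional.span_of_finite ℚ (Set.finite_range x)
  let x' : ι → V := fun i => ⟨x i, Submodule.subset_span (Set.mem_range_self i)⟩
  let b := Module.finBasis ℚ V
  let v : Fin (Module.finrank ℚ V) → ι → ℚ := fun t i => b.repr (x' i) t
  let φ : (Fin (Module.finrank ℚ V) → ℝ) → ι → ℝ := fun c => ∑ t, c t • ((↑) ∘ v t)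
  have hφx : φ (fun t => (b t : ℝ)) = x := by
    ext i
    have h := congrArg Subtype.val (b.sum_repr (x' i))
    simp only [Submodule.coe_sum, Submodule.coe_smul, Rat.smul_def] at h
    simp only [φ, v, Finset.sum_apply, Pi.smul_apply, Function.comp_apply, smul_eq_mul]
    rw [← show ((x' i : V) : ℝ) = x i from rfl, ← h]
    exact Finset.sum_congr rfl fun t _ => mul_comm _ _
  have hv : ∀ w : ι → ℚ, (fun i => (w i : ℝ)) ⬝ᵥ x = 0 → ∀ t, w ⬝ᵥ v t = 0 := by
    intro w hw t
    have h0 : ∑ i, w i • x' i = 0 := by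
      ext
      simpa [dotProduct, x', Rat.smul_def] using hw
    simpa [dotProduct, v] using congrArg (fun y => b.repr y t) h0
  obtain ⟨r, hr⟩ : ∃ r : Fin (Module.finrank ℚ V) → ℚ, φ ((↑) ∘ r) ∈ U :=
    (DenseRange.piMap fun _ => Rat.denseRange_cast).exists_mem_open
      (hU.preimage (by fun_prop)) ⟨_, by rwa [Set.mem_preimage, hφx]⟩
  refine ⟨∑ t, r t • v t, ?_, fun w hw => ?_⟩
  · convert hr using 1
    ext i
    simp [φ]
  · simp [dotProduct_sum, dotProduct_smul, hv w hw]

theorem exists_pos_nat_mul_eq_intCast {ι : Type*} [Fintype ι] (q : ι → ℚ) :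
    ∃ N : ℕ, 0 < N ∧ ∃ z : ι → ℤ, ∀ i, (z i : ℚ) = N * q i := by
  let N := ∏ i, (q i).den
  have hdvd (i : ι) : (q i).den ∣ N := Finset.dvd_prod_of_mem _ (Finset.mem_univ i)
  refine ⟨N, Finset.prod_pos fun i _ => (q i).den_pos, fun i => (q i).num * (N / (q i).den : ℕ),
    fun i => ?_⟩
  rw [Int.cast_mul, Int.cast_natCast, Nat.cast_div (hdvd i) (by simp), ← Rat.mul_den_eq_num]
  field_simp

theorem exists_intCast_mem_of_isOpen {ι : Type*} [Fintype ι] {x : ι → ℝ} {U : Set (ι → ℝ)}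
    (hU : IsOpen U) (hcone : ∀ t : ℝ, 0 < t → ∀ y ∈ U, t • y ∈ U) (hxU : x ∈ U) :
    ∃ z : ι → ℤ, (fun i => (z i : ℝ)) ∈ U ∧
      ∀ w : ι → ℤ, (fun i => (w i : ℝ)) ⬝ᵥ x = 0 → w ⬝ᵥ z = 0 := by
  obtain ⟨q, hqU, hq⟩ := exists_ratCast_mem_of_isOpen hU hxU
  obtain ⟨N, hN, z, hz⟩ := exists_pos_nat_mul_eq_intCast q
  have hzR : (fun i => (z i : ℝ)) = (N : ℝ) • fun i => (q i : ℝ) := by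
    ext i
    simpa using congrArg (Rat.cast : ℚ → ℝ) (hz i)
  refine ⟨z, hzR ▸ hcone N (by positivity) _ hqU, fun w hw => ?_⟩
  have hwq := hq (fun i => w i) (by simpa using hw)
  have : (fun i => (w i : ℚ)) ⬝ᵥ (fun i => (z i : ℚ)) = 0 := by
    simp only [dotProduct, hz, mul_left_comm _ (N : ℚ), ← Finset.mul_sum]
    rw [← dotProduct, hwq, mul_zero]
  simp only [dotProduct] at this ⊢
  exact_mod_cast this

theorem LinearMap.apply_eq_zero_of_forall_lt {𝕜 M : Type*} [Field 𝕜] [LinearOrder 𝕜]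
    [IsStrictOrderedRing 𝕜] [AddCommGroup M] [Module 𝕜 M] (f : M →ₗ[𝕜] 𝕜) {W : Submodule 𝕜 M}
    {v : 𝕜} (h : ∀ y ∈ W, v < f y) {y : M} (hy : y ∈ W) : f y = 0 := by
  by_contra hfy
  have := h (((v - 1) / f y) • y) (W.smul_mem _ hy)
  rw [map_smul, smul_eq_mul, div_mul_cancel₀ _ hfy] at this
  linarith

theorem exists_strongDual_eq_zero_and_pos {E ι : Type*} [AddCommGroup E] [Module ℝ E]
    [TopologicalSpace E] [IsTopologicalAddGroup E] [ContinuousSMul ℝ E] [LocallyConvexSpace ℝ E]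
    [T2Space E] [Fintype ι] (a : ι → E) (F : Set ι)
    (h : ∀ c : ι → ℝ, (∀ k ∉ F, 0 ≤ c k) → ∑ k, c k • a k = 0 → ∀ k ∉ F, c k = 0) :
    ∃ f : StrongDual ℝ E, (∀ j ∈ F, f (a j) = 0) ∧ ∀ k ∉ F, 0 < f (a k) := by
  classical
  -- Separate the convex hull of the `a k` with `k ∉ F` from the span of the `a j` with `j ∈ F`.
  let T : Set (ι → ℝ) := stdSimplex ℝ ι ∩ {c | ∀ j ∈ F, c j = 0}
  let W := Submodule.span ℝ (a '' F)
  have hT : IsCompact T := (isCompact_stdSimplex ℝ ι).inter_right <| by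
    simp only [Set.ofPred_forall]
    exact isClosed_biInter fun j _ => isClosed_eq (continuous_apply j) continuous_const
  have hTconv : Convex ℝ T := (convex_stdSimplex ℝ ι).inter fun c hc c' hc' s t _ _ _ j hj => by
    simp [hc j hj, hc' j hj]
  have hdisj : Disjoint (Fintype.linearCombination ℝ a '' T) W := by
    rw [Set.disjoint_left]
    rintro _ ⟨c, ⟨⟨hc0, hc1⟩, hcF⟩, rfl⟩ hW
    obtain ⟨l, hl, hlc⟩ := (Finsupp.mem_span_image_iff_linearCombination ℝ).mp hW
    have hlF : ∀ k ∉ F, l k = 0 := fun k hk => Finsupp.notMem_support_iff.mp fun h => hk (hl h)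
    rw [Finsupp.linearCombination_apply, Finsupp.sum_fintype _ _ (by simp),
      Fintype.linearCombination_apply] at hlc
    have hrel := h (c - l) (fun k hk => by simp [hlF k hk, hc0 k])
      (by simp [sub_smul, Finset.sum_sub_distrib, hlc])
    have hc : c = 0 := funext fun k => by
      by_cases hk : k ∈ F
      · exact hcF k hk
      · simpa [hlF k hk] using hrel k hk
    simp [hc] at hc1
  have : FiniteDimensional ℝ W := FiniteDimensional.span_of_finite ℝ (Set.toFinite _)
  obtain ⟨f, u, v, hfK, huv, hfW⟩ := geometric_hahn_banach_compact_closed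
    (hTconv.linear_image _) (hT.image (LinearMap.continuous_of_finiteDimensional _))
    W.convex W.closed_of_finiteDimensional hdisj
  have hv : v < 0 := by simpa using hfW 0 W.zero_mem
  refine ⟨-f, fun j hj => ?_, fun k hk => ?_⟩
  · simpa using (f : E →ₗ[ℝ] ℝ).apply_eq_zero_of_forall_lt hfW
      (Submodule.subset_span ⟨j, hj, rfl⟩)
  · have hsingle : Pi.single k 1 ∈ T :=
      ⟨single_mem_stdSimplex ℝ k, fun j hj => Pi.single_eq_of_ne (by rintro rfl; exact hk hj) _⟩
    have := hfK (a k) ⟨_, hsingle, by simp⟩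
    show 0 < -f (a k)
    linarith

theorem real_relation_eq_zero_of_int {ι κ : Type*} [Fintype ι] (a : ι → κ → ℤ)
    (F : Set ι) (h : ∀ z : ι → ℤ, (∀ k ∉ F, 0 ≤ z k) → ∑ k, z k • a k = 0 → ∀ k ∉ F, z k = 0)
    (c : ι → ℝ) (hc : ∀ k ∉ F, 0 ≤ c k) (hrel : ∑ k, c k • (fun i => (a k i : ℝ)) = 0) :
    ∀ k ∉ F, c k = 0 := by
  classical
  by_contra! ⟨k₀, hk₀, hck₀⟩
  let U : Set (ι → ℝ) := {μ | ∀ k, 0 < c k → 0 < μ k}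
  have hU : IsOpen U := by
    simp only [U, Set.ofPred_forall]
    exact isOpen_iInter_of_finite fun k =>
      isOpen_iInter_of_finite fun _ => isOpen_lt continuous_const (continuous_apply k)
  obtain ⟨z, hzU, hz⟩ := exists_intCast_mem_of_isOpen hU
    (fun t ht μ hμ k hk => mul_pos ht (hμ k hk)) (x := c) fun k hk => hk
  have hzF : ∀ k ∉ F, 0 ≤ z k := fun k hk => by
    rcases (hc k hk).lt_or_eq with hpos | hzero
    · exact_mod_cast (show (0 : ℝ) < z k from hzU k hpos).le
    · have := hz (Pi.single k 1) (by simp [dotProduct, Pi.single_apply, ← hzero])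
      exact (show z k = 0 by simpa using this).ge
  have hzrel : ∑ k, z k • a k = 0 := funext fun i => by
    have := hz (fun k => a k i) (by simpa [dotProduct, mul_comm] using congrFun hrel i)
    simpa [dotProduct, mul_comm] using this
  have hzk₀ : (0 : ℝ) < z k₀ := hzU k₀ ((hc k₀ hk₀).lt_of_ne' hck₀)
  simp [h z hzF hzrel k₀ hk₀] at hzk₀

theorem exists_int_dotProduct_eq_zero_and_pos {ι κ : Type*} [Fintype ι] [Fintype κ]
    (a : ι → κ → ℤ) (F : Set ι)
    (h : ∀ z : ι → ℤ, (∀ k ∉ F, 0 ≤ z k) → ∑ k, z k • a k = 0 → ∀ k ∉ F, z k = 0) :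
    ∃ y : κ → ℤ, (∀ j ∈ F, y ⬝ᵥ a j = 0) ∧ ∀ k ∉ F, 0 < y ⬝ᵥ a k := by
  classical
  let aR : ι → κ → ℝ := fun k i => a k i
  obtain ⟨f, hfF, hfpos⟩ :=
    exists_strongDual_eq_zero_and_pos aR F (real_relation_eq_zero_of_int a F h)
  let yR : κ → ℝ := fun i => f (Pi.single i 1)
  have hf : ∀ v, f v = yR ⬝ᵥ v := fun v => by
    conv_lhs => rw [pi_eq_sum_univ' v]
    simp [yR, dotProduct, mul_comm]
  let U : Set (κ → ℝ) := {y | ∀ k ∉ F, 0 < y ⬝ᵥ aR k}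
  have hU : IsOpen U := by
    simp only [U, Set.ofPred_forall]
    exact isOpen_iInter_of_finite fun k => isOpen_iInter_of_finite fun _ =>
      isOpen_lt continuous_const (by fun_prop)
  obtain ⟨y, hyU, hy⟩ := exists_intCast_mem_of_isOpen hU
    (fun t ht y hy k hk => by simpa using mul_pos ht (hy k hk)) (x := yR)
    fun k hk => hf (aR k) ▸ hfpos k hk
  refine ⟨y, fun j hj => ?_, fun k hk => ?_⟩
  · rw [dotProduct_comm]
    exact hy (a j) (by rw [dotProduct_comm, ← hf]; exact hfF j hj)
  · have := hyU k hk
    simp only [dotProduct, aR] at this ⊢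
    exact_mod_cast this

noncomputable def Ideal.quotientComapEquivOfSurjective {R S F : Type*} [CommRing R] [CommRing S]
    [FunLike F R S] [RingHomClass F R S] {f : F} (hf : Function.Surjective f) (I : Ideal S) :
    R ⧸ I.comap f ≃+* S ⧸ I :=
  (Ideal.quotEquivOfEq (by rw [← Ideal.comap_coe f, ← RingHom.comap_ker, Ideal.mk_ker])).trans
    (RingHom.quotientKerEquivOfSurjective (f := (Ideal.Quotient.mk I).comp f)
      (Ideal.Quotient.mk_surjective.comp hf))

namespace MvPolynomial

section KillCompl

variable {σ τ R : Type*} [CommRing R] {f : σ → τ} (hf : f.Injective)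

theorem killCompl_X_of_notMem {i : τ} (hi : i ∉ Set.range f) :
    killCompl (R := R) hf (X i) = 0 := by
  rw [killCompl, aeval_X, dif_neg hi]

theorem ker_killCompl :
    RingHom.ker (killCompl (R := R) hf) = Ideal.span (X '' (Set.range f)ᶜ) := by
  set J : Ideal (MvPolynomial τ R) := Ideal.span (X '' (Set.range f)ᶜ)
  refine le_antisymm (fun p hp => ?_) (Ideal.span_le.mpr ?_)
  · have hrename : (Ideal.Quotient.mkₐ R J).comp ((rename f).comp (killCompl hf)) =
        Ideal.Quotient.mkₐ R J := by
      refine algHom_ext fun i => ?_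
      by_cases hi : i ∈ Set.range f
      · obtain ⟨k, rfl⟩ := hi
        rw [AlgHom.comp_apply, AlgHom.comp_apply, ← rename_X f k, killCompl_rename_app]
      · rw [AlgHom.comp_apply, AlgHom.comp_apply, killCompl_X_of_notMem hf hi, map_zero,
          map_zero, eq_comm, Ideal.Quotient.mkₐ_eq_mk, Ideal.Quotient.eq_zero_iff_mem]
        exact Ideal.subset_span ⟨i, hi, rfl⟩
    rw [← Ideal.Quotient.eq_zero_iff_mem, ← Ideal.Quotient.mkₐ_eq_mk R, ← hrename,
      AlgHom.comp_apply, AlgHom.comp_apply, RingHom.mem_ker.mp hp, map_zero, map_zero]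
  · rintro _ ⟨i, hi, rfl⟩
    exact killCompl_X_of_notMem hf hi

theorem comap_killCompl (I : Ideal (MvPolynomial σ R)) :
    I.comap (killCompl hf) = Ideal.span (X '' (Set.range f)ᶜ) ⊔ I.map (rename f) := by
  refine le_antisymm (fun p hp => ?_) (sup_le ?_ ?_)
  · rw [← sub_add_cancel p (rename f (killCompl hf p))]
    refine Submodule.add_mem_sup ?_ (Ideal.mem_map_of_mem _ hp)
    rw [← ker_killCompl hf, RingHom.mem_ker, map_sub, killCompl_rename_app, sub_self]
  · rw [← ker_killCompl hf]
    exact Ideal.ker_le_comap _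
  · rw [Ideal.map_le_iff_le_comap]
    intro p hp
    simpa [killCompl_rename_app] using hp

end KillCompl

theorem monomial_mem_iff_exists_X_mem {σ R : Type*} [CommRing R]
    {P : Ideal (MvPolynomial σ R)} [P.IsPrime] (u : σ →₀ ℕ) {c : R} (hc : IsUnit c) :
    monomial u c ∈ P ↔ ∃ k ∈ u.support, X k ∈ P := by
  rw [monomial_eq, Ideal.unit_mul_mem_iff_mem P (hc.map C), Finsupp.prod,
    Ideal.IsPrime.prod_mem_iff]
  refine exists_congr fun k => and_congr_right fun hk => ?_
  exact Ideal.IsPrime.pow_mem_iff_mem ‹_› _ (Nat.pos_of_ne_zero (Finsupp.mem_support_iff.mp hk))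

end MvPolynomial

section FaceMap

variable (R : Type*) {ι κ G : Type*} [CommRing R] [AddCommMonoid G]

noncomputable def faceMap (v : ι → G) (S : Set ι) :
    MvPolynomial ι R →ₐ[R] AddMonoidAlgebra R G :=
  aeval (S.indicator fun j => AddMonoidAlgebra.single (v j) 1)

variable {R}

open Classical in
theorem faceMap_monomial (v : ι → G) (S : Set ι) (u : ι →₀ ℕ) (c : R) :
    faceMap R v S (monomial u c) =
      if ↑u.support ⊆ S then AddMonoidAlgebra.single (Finsupp.weight v u) c else 0 := by
  rw [faceMap, aeval_monomial, Finsupp.prod]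
  split_ifs with hu
  · rw [Finset.prod_congr rfl fun j hj => by rw [Set.indicator_of_mem (hu hj)],
      Finset.prod_congr rfl fun j _ => AddMonoidAlgebra.single_pow _ _ _,
      AddMonoidAlgebra.prod_single, Finsupp.weight_apply, Finsupp.sum]
    simp
  · obtain ⟨j, hj, hjS⟩ := Set.not_subset.mp hu
    rw [Finset.prod_eq_zero hj (by simp [Set.indicator_of_notMem hjS,
      Finsupp.mem_support_iff.mp hj]), mul_zero]

theorem faceMap_univ_comp_rename (v : ι → G) (f : κ → ι) :
    (faceMap R v Set.univ).comp (rename f) = faceMap R (v ∘ f) Set.univ := by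
  refine algHom_ext fun i => ?_
  simp [faceMap]

theorem faceMap_range_eq_comp_killCompl (v : ι → G) {f : κ → ι} (hf : f.Injective) :
    faceMap R v (Set.range f) = (faceMap R (v ∘ f) Set.univ).comp (killCompl hf) := by
  refine algHom_ext fun i => ?_
  by_cases hi : i ∈ Set.range f
  · obtain ⟨k, rfl⟩ := hi
    rw [AlgHom.comp_apply, ← rename_X f k, killCompl_rename_app, rename_X]
    simp [faceMap]
  · simp [faceMap, killCompl, hi]

theorem weight_eq_zero_iff_support_subset (v : ι → G) (S : Set ι) (L : G →+ ℤ)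
    (hL : ∀ k, 0 ≤ L (v k)) (hS : ∀ k, k ∈ S ↔ L (v k) = 0) (u : ι →₀ ℕ) :
    L (Finsupp.weight v u) = 0 ↔ ↑u.support ⊆ S := by
  rw [Finsupp.weight_apply, map_finsuppSum, Finsupp.sum,
    Finset.sum_eq_zero_iff_of_nonneg fun k _ => by simpa using mul_nonneg (by positivity) (hL k)]
  refine forall₂_congr fun k hk => ?_
  rw [map_nsmul, smul_eq_zero, hS]
  simp [Finsupp.mem_support_iff.mp hk]

theorem coeff_faceMap_eq_ite (v : ι → G) (S : Set ι) (L : G →+ ℤ)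
    (hL : ∀ k, 0 ≤ L (v k)) (hS : ∀ k, k ∈ S ↔ L (v k) = 0) (p : MvPolynomial ι R) (g : G) :
    (faceMap R v S p).coeff g = if L g = 0 then (faceMap R v Set.univ p).coeff g else 0 := by
  classical
  induction p using induction_on' with
  | monomial u c =>
    have := weight_eq_zero_iff_support_subset v S L hL hS u
    simp only [faceMap_monomial, Set.subset_univ, if_true]
    by_cases hg : Finsupp.weight v u = g
    · subst hg
      by_cases hu : ↑u.support ⊆ S <;> simp_all
    · split_ifs <;> simp [hg]
  | add p q hp hq =>
    simp only [map_add, AddMonoidAlgebra.coeff_add, Finsupp.add_apply, hp, hq]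
    split_ifs <;> simp

theorem ker_faceMap_univ_le (v : ι → G) (S : Set ι) (L : G →+ ℤ)
    (hL : ∀ k, 0 ≤ L (v k)) (hS : ∀ k, k ∈ S ↔ L (v k) = 0) :
    RingHom.ker (faceMap R v Set.univ) ≤ RingHom.ker (faceMap R v S) := fun p hp => by
  rw [RingHom.mem_ker] at hp ⊢
  ext g
  simp [coeff_faceMap_eq_ite v S L hL hS, hp]

theorem faceMap_weightedHomogeneousComponent (v : ι → G) (S : Set ι) (g : G)
    (p : MvPolynomial ι R) :
    faceMap R v S (weightedHomogeneousComponent v g p) =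
      AddMonoidAlgebra.single g ((faceMap R v S p).coeff g) := by
  classical
  induction p using induction_on' with
  | monomial u c =>
    have hu := isWeightedHomogeneous_monomial v u c rfl
    by_cases hg : Finsupp.weight v u = g
    · subst hg
      rw [hu.weightedHomogeneousComponent_same, faceMap_monomial]
      split_ifs <;> simp
    · rw [hu.weightedHomogeneousComponent_ne g (Ne.symm hg), map_zero, faceMap_monomial]
      split_ifs <;> simp [hg]
  | add p q hp hq =>
    simp [hp, hq, AddMonoidAlgebra.single_add]

end FaceMap

theorem faceMap_eq_zero_of_isWeightedHomogeneous {K ι G : Type*} [Field K] [AddCommMonoid G]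
    (v : ι → G) (S : Set ι) {P : Ideal (MvPolynomial ι K)} [P.IsPrime]
    (hker : RingHom.ker (faceMap K v S) ≤ P) (hS : ∀ k ∈ S, X k ∉ P) {q : MvPolynomial ι K}
    (hqP : q ∈ P) {g : G} (hq : IsWeightedHomogeneous v q g) : faceMap K v S q = 0 := by
  classical
  set s := (faceMap K v S q).coeff g
  have hsingle : faceMap K v S q = AddMonoidAlgebra.single g s := by
    rw [← faceMap_weightedHomogeneousComponent, hq.weightedHomogeneousComponent_same]
  by_contra hne
  obtain ⟨u, hu, hune⟩ : ∃ u ∈ q.support, faceMap K v S (monomial u (coeff u q)) ≠ 0 := by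
    refine Finset.exists_ne_zero_of_sum_ne_zero ?_
    rwa [← map_sum, support_sum_monomial_coeff]
  have hsub : ↑u.support ⊆ S := by
    by_contra hsub
    rw [faceMap_monomial, if_neg hsub] at hune
    exact hune rfl
  have hs : s ≠ 0 := fun h => hne (by rw [hsingle, h, AddMonoidAlgebra.single_zero])
  have hdiff : q - monomial u s ∈ P := hker <| by
    rw [RingHom.mem_ker, map_sub, faceMap_monomial, if_pos hsub, hq (mem_support_iff.mp hu),
      hsingle, sub_self]
  obtain ⟨k, hk, hkP⟩ := (monomial_mem_iff_exists_X_mem u hs.isUnit).mp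
    (by simpa using P.sub_mem hqP hdiff)
  exact hS k (hsub hk) hkP

theorem eq_zero_of_X_mem_of_sum_zsmul_eq_zero {R ι G : Type*} [CommRing R] [Fintype ι]
    [AddCommGroup G] (v : ι → G) {P : Ideal (MvPolynomial ι R)} [P.IsPrime]
    (hker : RingHom.ker (faceMap R v Set.univ) ≤ P) (z : ι → ℤ) (hz : ∀ k, X k ∈ P → 0 ≤ z k)
    (hrel : ∑ k, z k • v k = 0) : ∀ k, X k ∈ P → z k = 0 := by
  let u : ι →₀ ℕ := Finsupp.equivFunOnFinite.symm fun k => (z k).toNat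
  let w : ι →₀ ℕ := Finsupp.equivFunOnFinite.symm fun k => (-z k).toNat
  have hweight : Finsupp.weight v u = Finsupp.weight v w := by
    have (f : ι → ℕ) : Finsupp.weight v (Finsupp.equivFunOnFinite.symm f) = ∑ k, f k • v k := by
      rw [Finsupp.weight_apply, Finsupp.sum_fintype _ _ fun _ => zero_smul ℕ (v _)]
      rfl
    rw [this, this, ← sub_eq_zero, ← Finset.sum_sub_distrib, ← hrel]
    refine Finset.sum_congr rfl fun k _ => ?_
    rw [← natCast_zsmul, ← natCast_zsmul, ← sub_smul, Int.toNat_sub_toNat_neg]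
  have hw : monomial w (1 : R) ∉ P := by
    rw [monomial_mem_iff_exists_X_mem w isUnit_one]
    rintro ⟨k, hk, hkP⟩
    exact Finsupp.mem_support_iff.mp hk (Int.toNat_eq_zero.mpr (by linarith [hz k hkP]))
  have hu : monomial u (1 : R) ∉ P := fun hu => hw <| by
    have : monomial u (1 : R) - monomial w 1 ∈ P := hker <| by
      simp [RingHom.mem_ker, faceMap_monomial, hweight]
    simpa using P.sub_mem hu this
  intro k hkP
  rw [monomial_mem_iff_exists_X_mem u isUnit_one] at hu
  have huk : u k = 0 := Finsupp.notMem_support_iff.mp fun hk => hu ⟨k, hk, hkP⟩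
  exact le_antisymm (Int.toNat_eq_zero.mp huk) (hz k hkP)

abbrev columns (A : Matrix (Fin d) (Fin n) ℤ) (j : Fin n) : Fin d → ℤ := fun i => A i j

theorem degA_eq_neg_weight (A : Matrix (Fin d) (Fin n) ℤ) (u : Fin n →₀ ℕ) :
    degA A u = -Finsupp.weight (columns A) u := by
  ext i
  simp [degA, Finsupp.weight_apply, Finsupp.sum_fintype, mul_comm]

theorem homogComponentA_eq (A : Matrix (Fin d) (Fin n) ℤ) (δ : Fin d → ℤ)
    (p : MvPolynomial (Fin n) ℂ) :
    homogComponentA A δ p = weightedHomogeneousComponent (columns A) (-δ) p := by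
  rw [weightedHomogeneousComponent_apply]
  refine Finset.sum_congr (Finset.ext fun u => ?_) fun _ _ => rfl
  simp only [Finset.mem_filter, degA_eq_neg_weight, neg_eq_iff_eq_neg]

theorem isGradedIdeal_iff (A : Matrix (Fin d) (Fin n) ℤ) (J : Ideal (MvPolynomial (Fin n) ℂ)) :
    IsGradedIdeal A J ↔ ∀ p ∈ J, ∀ g, weightedHomogeneousComponent (columns A) g p ∈ J := by
  simp only [IsGradedIdeal, homogComponentA_eq]
  exact forall₂_congr fun p _ => ⟨fun h g => by simpa using h (-g), fun h δ => h _⟩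

theorem toricIdeal_eq_ker_faceMap (A : Matrix (Fin d) (Fin n) ℤ) :
    toricIdeal A = RingHom.ker (faceMap ℂ (columns A) Set.univ) := by
  rw [faceMap, Set.indicator_univ]
  rfl

theorem faceToricIdeal_eq_ker_faceMap (A : Matrix (Fin d) (Fin n) ℤ) (F : Finset (Fin n)) :
    faceToricIdeal A F = RingHom.ker (faceMap ℂ (fun k : F => columns A k) Set.univ) := by
  rw [faceMap, Set.indicator_univ]
  rfl

theorem facePrimeIdeal_eq_comap_killCompl (A : Matrix (Fin d) (Fin n) ℤ) (F : Finset (Fin n)) :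
    facePrimeIdeal A F = (faceToricIdeal A F).comap (killCompl Subtype.val_injective) := by
  rw [comap_killCompl, Subtype.range_coe_subtype, Set.compl_ofPred]
  rfl

theorem facePrimeIdeal_eq_ker_faceMap (A : Matrix (Fin d) (Fin n) ℤ) (F : Finset (Fin n)) :
    facePrimeIdeal A F = RingHom.ker (faceMap ℂ (columns A) F) := by
  ext p
  rw [facePrimeIdeal_eq_comap_killCompl, faceToricIdeal_eq_ker_faceMap, Ideal.mem_comap,
    RingHom.mem_ker, RingHom.mem_ker, ← Subtype.range_coe (s := (F : Set (Fin n))),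
    faceMap_range_eq_comp_killCompl]
  rfl

theorem facePrimeIdeal_isPrime (A : Matrix (Fin d) (Fin n) ℤ) (F : Finset (Fin n)) :
    (facePrimeIdeal A F).IsPrime := by
  rw [facePrimeIdeal_eq_ker_faceMap]
  exact RingHom.ker_isPrime _

noncomputable def quotientFacePrimeIdealEquiv (A : Matrix (Fin d) (Fin n) ℤ)
    (F : Finset (Fin n)) :
    (MvPolynomial (Fin n) ℂ ⧸ facePrimeIdeal A F) ≃+*
      (MvPolynomial {k : Fin n // k ∈ F} ℂ ⧸ faceToricIdeal A F) :=
  (Ideal.quotEquivOfEq (facePrimeIdeal_eq_comap_killCompl A F)).trans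
    (Ideal.quotientComapEquivOfSurjective
      (fun p => ⟨rename Subtype.val p, killCompl_rename_app Subtype.val_injective p⟩) _)

theorem toricIdeal_le_facePrimeIdeal {A : Matrix (Fin d) (Fin n) ℤ} {F : Finset (Fin n)}
    (hF : IsPrimeFaceIdx A F) : toricIdeal A ≤ facePrimeIdeal A F := by
  obtain ⟨L, hL, hLF⟩ := hF
  rw [toricIdeal_eq_ker_faceMap, facePrimeIdeal_eq_ker_faceMap]
  exact ker_faceMap_univ_le _ _ L.toAddMonoidHom hL hLF

theorem isGradedIdeal_facePrimeIdeal (A : Matrix (Fin d) (Fin n) ℤ) (F : Finset (Fin n)) :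
    IsGradedIdeal A (facePrimeIdeal A F) := by
  rw [isGradedIdeal_iff, facePrimeIdeal_eq_ker_faceMap]
  intro p hp g
  rw [RingHom.mem_ker, faceMap_weightedHomogeneousComponent, RingHom.mem_ker.mp hp]
  simp

theorem facePrimeIdeal_le {A : Matrix (Fin d) (Fin n) ℤ} {F : Finset (Fin n)}
    {P : Ideal (MvPolynomial (Fin n) ℂ)} (hP : toricIdeal A ≤ P) (hF : ∀ k ∉ F, X k ∈ P) :
    facePrimeIdeal A F ≤ P := by
  refine sup_le (Ideal.span_le.mpr ?_) (le_trans ?_ hP)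
  · rintro _ ⟨k, hk, rfl⟩
    exact hF k hk
  · rw [Ideal.map_le_iff_le_comap, faceToricIdeal_eq_ker_faceMap, toricIdeal_eq_ker_faceMap]
    intro p hp
    rw [Ideal.mem_comap, RingHom.mem_ker, ← AlgHom.comp_apply, faceMap_univ_comp_rename]
    exact hp

theorem isPrimeFaceIdx_of_isPrime {A : Matrix (Fin d) (Fin n) ℤ}
    {P : Ideal (MvPolynomial (Fin n) ℂ)} [P.IsPrime] (hP : toricIdeal A ≤ P)
    {F : Finset (Fin n)} (hF : ∀ k, k ∈ F ↔ X k ∉ P) : IsPrimeFaceIdx A F := by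
  rw [toricIdeal_eq_ker_faceMap] at hP
  obtain ⟨y, hyF, hy⟩ := exists_int_dotProduct_eq_zero_and_pos (columns A) (F : Set (Fin n))
    fun z hz hrel k hk => eq_zero_of_X_mem_of_sum_zsmul_eq_zero _ hP z
      (fun k hkP => hz k (by simpa [hF] using hkP)) hrel k (by simpa [hF] using hk)
  refine ⟨dotProductEquiv ℤ (Fin d) y, fun k => ?_, fun k => ?_⟩
  · by_cases hk : k ∈ F
    · exact (hyF k hk).ge
    · exact (hy k hk).le
  · exact ⟨hyF k, fun h => by_contra fun hk => (hy k hk).ne' h⟩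

theorem le_facePrimeIdeal_of_isGradedIdeal {A : Matrix (Fin d) (Fin n) ℤ}
    {P : Ideal (MvPolynomial (Fin n) ℂ)} [P.IsPrime] (hP : toricIdeal A ≤ P)
    (hgr : IsGradedIdeal A P) {F : Finset (Fin n)} (hF : ∀ k, k ∈ F ↔ X k ∉ P) :
    P ≤ facePrimeIdeal A F := by
  have hle := facePrimeIdeal_le (F := F) hP fun k hk => by simpa [hF] using hk
  rw [facePrimeIdeal_eq_ker_faceMap] at hle ⊢
  intro p hp
  rw [RingHom.mem_ker]
  ext g
  have := faceMap_eq_zero_of_isWeightedHomogeneous _ _ hle (fun k hk => (hF k).mp hk)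
    ((isGradedIdeal_iff A P).mp hgr p hp g) (weightedHomogeneousComponent_isWeightedHomogeneous g p)
  rw [faceMap_weightedHomogeneousComponent, AddMonoidAlgebra.single_eq_zero] at this
  simpa using this

theorem graded_primes_over_toric_ideal_general (A : Matrix (Fin d) (Fin n) ℤ) :
    (∀ P : Ideal (MvPolynomial (Fin n) ℂ),
      (P.IsPrime ∧ toricIdeal A ≤ P ∧ IsGradedIdeal A P) ↔
        ∃ F : Finset (Fin n), IsPrimeFaceIdx A F ∧ P = facePrimeIdeal A F) ∧
    (∀ F : Finset (Fin n), IsPrimeFaceIdx A F →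
      Nonempty ((MvPolynomial (Fin n) ℂ ⧸ facePrimeIdeal A F) ≃+*
        (MvPolynomial {k : Fin n // k ∈ F} ℂ ⧸ faceToricIdeal A F))) := by
  classical
  refine ⟨fun P => ⟨fun ⟨hP, hI, hgr⟩ => ?_, ?_⟩, fun F _ => ⟨quotientFacePrimeIdealEquiv A F⟩⟩
  · let F := Finset.univ.filter fun k => X k ∉ P
    have hF : ∀ k, k ∈ F ↔ X k ∉ P := by simp [F]
    exact ⟨F, isPrimeFaceIdx_of_isPrime hI hF, le_antisymm
      (le_facePrimeIdeal_of_isGradedIdeal hI hgr hF)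
      (facePrimeIdeal_le hI fun k hk => by simpa [hF] using hk)⟩
  · rintro ⟨F, hF, rfl⟩
    exact ⟨facePrimeIdeal_isPrime A F, toricIdeal_le_facePrimeIdeal hF,
      isGradedIdeal_facePrimeIdeal A F⟩

/-- for `A` with pointed semigroup `ℕA`, the `ℤ^d`-graded prime ideals of
`R_A` containing the toric ideal `I_A` are exactly the ideals `I_A^F = ⟨∂_k : k ∉ F⟩ +
R_A·I_F` for `F` a prime face of `A`; moreover `R_A/I_A^F ≅ R_F/I_F`. -/
theorem graded_primes_over_toric_ideal (A : Matrix (Fin d) (Fin n) ℤ)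
    (hpointed : ∀ v ∈ AddSubmonoid.closure
        (Set.range (fun j : Fin n => fun i : Fin d => A i j)),
      -v ∈ AddSubmonoid.closure (Set.range (fun j : Fin n => fun i : Fin d => A i j)) →
        v = 0) :
    (∀ P : Ideal (MvPolynomial (Fin n) ℂ),
      (P.IsPrime ∧ toricIdeal A ≤ P ∧ IsGradedIdeal A P) ↔
        ∃ F : Finset (Fin n), IsPrimeFaceIdx A F ∧ P = facePrimeIdeal A F) ∧
    (∀ F : Finset (Fin n), IsPrimeFaceIdx A F →
      Nonempty ((MvPolynomial (Fin n) ℂ ⧸ facePrimeIdeal A F) ≃+*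
        (MvPolynomial {k : Fin n // k ∈ F} ℂ ⧸ faceToricIdeal A F))) :=
  graded_primes_over_toric_ideal_general A
end

section
/- Let A be a 1×1 matrix (1), so H_A(β) = D/D·(x∂ − β) where D is the first Weyl algebra. For β ∈ ℕ, the set a_β = {P ∈ ℂ[∂] : ∃ f ∈ ℂ[x], f·P ∈ D·(x∂ − β)} equals the ideal ⟨∂^{β+1}⟩ of ℂ[∂]. -/
open Polynomial

lemma weyl_dx : dop 1 0 * xop 1 0 = xop 1 0 * dop 1 0 + 1 := by
  have h := RingQuot.mkAlgHom_rel ℂ (WeylRel.dx (n := 1) 0 0)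
  simpa [xop, dop, map_mul, map_add, map_one] using h

lemma x_mul_dpow (m : ℕ) :
    xop 1 0 * (dop 1 0) ^ (m + 1) =
      (dop 1 0) ^ m * (xop 1 0 * dop 1 0 - (m : Weyl 1)) := by
  induction m with
  | zero => simp
  | succ m ih =>
    have key : (xop 1 0 * dop 1 0 - (m : Weyl 1)) * dop 1 0
        = dop 1 0 * (xop 1 0 * dop 1 0 - ((m : Weyl 1) + 1)) := by
      have : dop 1 0 * (xop 1 0 * dop 1 0) = (xop 1 0 * dop 1 0 + 1) * dop 1 0 := by
        rw [← mul_assoc, weyl_dx]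
      have h2 : (m : Weyl 1) * dop 1 0 = dop 1 0 * (m : Weyl 1) := (Nat.cast_commute m _).eq
      noncomm_ring [this, h2]
    calc xop 1 0 * (dop 1 0) ^ (m + 2)
        = (xop 1 0 * (dop 1 0) ^ (m + 1)) * dop 1 0 := by rw [pow_succ, mul_assoc]
      _ = (dop 1 0) ^ m * ((xop 1 0 * dop 1 0 - (m : Weyl 1)) * dop 1 0) := by
          rw [ih, mul_assoc]
      _ = (dop 1 0) ^ (m + 1) * (xop 1 0 * dop 1 0 - ((m + 1 : ℕ) : Weyl 1)) := by
          rw [key, pow_succ, mul_assoc]; push_cast; ring_nf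

noncomputable def Jb (β : ℕ) : Ideal (Weyl 1) :=
  Ideal.span {xop 1 0 * dop 1 0 - (β : Weyl 1)}

lemma mem_Jb {β : ℕ} {z : Weyl 1} :
    z ∈ Jb β ↔ ∃ Q : Weyl 1, Q * (xop 1 0 * dop 1 0 - (β : Weyl 1)) = z := by
  constructor
  · intro h
    obtain ⟨Q, hQ⟩ := Submodule.mem_span_singleton.mp h
    exact ⟨Q, by simpa [smul_eq_mul] using hQ⟩
  · rintro ⟨Q, rfl⟩
    exact Ideal.mul_mem_left _ _ (Ideal.subset_span (Set.mem_singleton _))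

lemma pow_mem_Jb (β k : ℕ) :
    (xop 1 0) ^ (k + 1) * (dop 1 0) ^ (β + 1 + k) ∈ Jb β := by
  induction k with
  | zero =>
    rw [mem_Jb]
    exact ⟨(dop 1 0) ^ β, by simpa using (x_mul_dpow β).symm⟩
  | succ k ih =>
    have h := x_mul_dpow (β + 1 + k)
    have hsplit : xop 1 0 * dop 1 0 - ((β + 1 + k : ℕ) : Weyl 1)
        = (xop 1 0 * dop 1 0 - (β : Weyl 1)) - ((k + 1 : ℕ) : Weyl 1) := by
      push_cast; noncomm_ring
    have expand : (xop 1 0) ^ (k + 2) * (dop 1 0) ^ (β + 1 + (k + 1))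
        = ((xop 1 0) ^ (k + 1) * (dop 1 0) ^ (β + 1 + k)) *
            (xop 1 0 * dop 1 0 - (β : Weyl 1))
          - ((k + 1 : ℕ) : Weyl 1) * ((xop 1 0) ^ (k + 1) * (dop 1 0) ^ (β + 1 + k)) := by
      have e1 : (xop 1 0) ^ (k + 2) * (dop 1 0) ^ (β + 1 + (k + 1))
          = (xop 1 0) ^ (k + 1) * (xop 1 0 * (dop 1 0) ^ (β + 1 + k + 1)) := by
        rw [pow_succ, mul_assoc]
        rfl
      rw [e1, h, hsplit, mul_sub, mul_sub, ← mul_assoc, ← mul_assoc]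
      congr 1
      exact ((Nat.cast_commute (k + 1) _).eq).symm
    rw [expand]
    refine sub_mem ?_ ?_
    · rw [mem_Jb]; exact ⟨_, rfl⟩
    · exact Ideal.mul_mem_left _ _ ih

lemma big_mem_Jb (β : ℕ) (q : ℂ[X]) :
    (xop 1 0) ^ (q.natDegree + 1) * (aeval (dop 1 0) q * (dop 1 0) ^ (β + 1)) ∈ Jb β := by
  set m := q.natDegree
  rw [aeval_eq_sum_range, Finset.sum_mul, Finset.mul_sum]
  refine Submodule.sum_mem _ ?_
  intro i hi
  rw [Finset.mem_range] at hi
  have hi' : i ≤ m := Nat.lt_succ_iff.mp hi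
  have e : (xop 1 0) ^ (m + 1) * (dop 1 0) ^ i * (dop 1 0) ^ (β + 1)
      = (xop 1 0) ^ (m - i) * ((xop 1 0) ^ (i + 1) * (dop 1 0) ^ (β + 1 + i)) := by
    rw [mul_assoc, ← pow_add, ← mul_assoc, ← pow_add]
    congr 2 <;> omega
  rw [smul_mul_assoc, mul_smul_comm, ← mul_assoc, e]
  exact Submodule.smul_of_tower_mem _ _ (Ideal.mul_mem_left _ _ (pow_mem_Jb β i))

noncomputable def repFree : FreeAlgebra ℂ (Fin 1 ⊕ Fin 1) →ₐ[ℂ] Module.End ℂ (Polynomial ℂ) :=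
  FreeAlgebra.lift ℂ (Sum.elim
    (fun _ => (Algebra.lmul ℂ (Polynomial ℂ)) Polynomial.X)
    (fun _ => (Polynomial.derivative : Polynomial ℂ →ₗ[ℂ] Polynomial ℂ)))

lemma repFree_rel : ∀ ⦃x y : FreeAlgebra ℂ (Fin 1 ⊕ Fin 1)⦄, WeylRel 1 x y →
    repFree x = repFree y := by
  intro x y h
  induction h with
  | xx i j =>
    have : i = j := Subsingleton.elim i j
    subst this; rfl
  | dd i j =>
    have : i = j := Subsingleton.elim i j
    subst this; rfl
  | dx i j =>
    have : i = j := Subsingleton.elim i j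
    subst this
    apply LinearMap.ext
    intro g
    simp only [map_mul, map_add, repFree, FreeAlgebra.lift_ι_apply, Sum.elim_inl,
      Sum.elim_inr, if_pos, map_one, Module.End.mul_apply, LinearMap.add_apply,
      Module.End.one_apply, Algebra.coe_lmul_eq_mul, LinearMap.mul_apply']
    rw [Polynomial.derivative_mul, Polynomial.derivative_X, one_mul]
    ring

noncomputable def rep : Weyl 1 →ₐ[ℂ] Module.End ℂ (Polynomial ℂ) :=
  RingQuot.liftAlgHom ℂ ⟨repFree, repFree_rel⟩

lemma rep_x : rep (xop 1 0) = (Algebra.lmul ℂ (Polynomial ℂ)) Polynomial.X := by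
  rw [xop, rep, RingQuot.liftAlgHom_mkAlgHom_apply]
  simp [repFree]

lemma rep_d : rep (dop 1 0) = (Polynomial.derivative : Polynomial ℂ →ₗ[ℂ] Polynomial ℂ) := by
  rw [dop, rep, RingQuot.liftAlgHom_mkAlgHom_apply]
  simp [repFree]

lemma coeff_eq_zero_of_aeval_deriv (β : ℕ) (p : ℂ[X])
    (h : (aeval (Polynomial.derivative : Module.End ℂ (Polynomial ℂ)) p) (X ^ β) = 0) :
    ∀ j ≤ β, p.coeff j = 0 := by
  intro j hj
  rcases lt_or_ge p.natDegree j with hdeg | hdeg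
  · exact coeff_eq_zero_of_natDegree_lt hdeg
  rw [aeval_eq_sum_range, LinearMap.sum_apply] at h
  simp only [LinearMap.smul_apply, Module.End.pow_apply,
    Polynomial.iterate_derivative_X_pow_eq_smul] at h
  have h3 := congrArg (fun u : ℂ[X] => u.coeff (β - j)) h
  simp only [finset_sum_coeff, coeff_smul, coeff_X_pow, smul_eq_mul, coeff_zero] at h3
  rw [Finset.sum_eq_single_of_mem j (Finset.mem_range.mpr (Nat.lt_succ_of_le hdeg))] at h3
  · simp only [if_pos rfl, eq_self_iff_true, if_true, mul_one] at h3
    have hd : ((β.descFactorial j : ℂ)) ≠ 0 := by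
      rw [Nat.cast_ne_zero]
      intro h0
      exact absurd (Nat.descFactorial_eq_zero_iff_lt.mp h0) (not_lt.mpr hj)
    rcases mul_eq_zero.mp h3 with h4 | h4
    · exact h4
    · exact absurd h4 hd
  · intro b _ hbj
    by_cases hc : β - j = β - b
    · have hbβ : β < b := by omega
      simp [Nat.descFactorial_eq_zero_iff_lt.mpr hbβ]
    · simp [hc]

lemma x_mul_deriv_pow (β : ℕ) :
    (X : Polynomial ℂ) * Polynomial.derivative ((X : Polynomial ℂ) ^ β)
      = (β : ℂ) • (X : Polynomial ℂ) ^ β := by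
  rw [derivative_X_pow]
  cases β with
  | zero => simp
  | succ n =>
    simp only [Nat.add_sub_cancel, smul_eq_C_mul]
    push_cast
    ring

/-- for the 1×1 matrix `A = (1)`, `H_A(β) = D/D·(x∂ − β)` with `D` the first
Weyl algebra.  For `β ∈ ℕ`, the set
`a_β = {P ∈ ℂ[∂] : ∃ f ∈ ℂ[x], f ≠ 0, f·P ∈ D·(x∂ − β)}`
equals the ideal `⟨∂^{β+1}⟩` of `ℂ[∂]`. -/
theorem aBeta_eq_span_pow (β : ℕ) :
    { p : Polynomial ℂ | ∃ f : Polynomial ℂ, f ≠ 0 ∧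
        ∃ Q : Weyl 1,
          (Polynomial.aeval (xop 1 0) f) * (Polynomial.aeval (dop 1 0) p) =
            Q * (xop 1 0 * dop 1 0 - algebraMap ℂ (Weyl 1) (β : ℂ)) } =
      { p : Polynomial ℂ | p ∈ Ideal.span {(Polynomial.X : Polynomial ℂ) ^ (β + 1)} } := by
  ext p
  simp only [Set.mem_setOf_eq]
  constructor
  · rintro ⟨f, hf, Q, hQ⟩
    rw [Ideal.mem_span_singleton, X_pow_dvd_iff]
    set v := (aeval (Polynomial.derivative : Module.End ℂ (Polynomial ℂ)) p)
      ((X : Polynomial ℂ) ^ β) with hv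
    have hz : (rep (xop 1 0 * dop 1 0 - algebraMap ℂ (Weyl 1) (β : ℂ)))
        ((X : Polynomial ℂ) ^ β) = 0 := by
      rw [map_sub, map_mul, AlgHom.commutes, rep_x, rep_d]
      simp only [LinearMap.sub_apply, Module.End.mul_apply, Module.algebraMap_end_apply,
        Algebra.coe_lmul_eq_mul, LinearMap.mul_apply']
      rw [x_mul_deriv_pow, sub_self]
    have hA : rep ((aeval (xop 1 0) f) * (aeval (dop 1 0) p)) ((X : Polynomial ℂ) ^ β)
        = f * v := by
      rw [map_mul, Module.End.mul_apply,
        ← Polynomial.aeval_algHom_apply rep (dop 1 0) p, rep_d, ← hv,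
        ← Polynomial.aeval_algHom_apply rep (xop 1 0) f, rep_x,
        Polynomial.aeval_algHom_apply (Algebra.lmul ℂ (Polynomial ℂ)) X f,
        aeval_X_left_apply]
      simp [Algebra.coe_lmul_eq_mul, LinearMap.mul_apply']
    have hB : rep (Q * (xop 1 0 * dop 1 0 - algebraMap ℂ (Weyl 1) (β : ℂ)))
        ((X : Polynomial ℂ) ^ β) = 0 := by
      rw [map_mul, Module.End.mul_apply, hz, map_zero]
    have hv0 : v = 0 := by
      have h2 := hA.symm.trans
        ((congrArg (fun w => (rep w) ((X : Polynomial ℂ) ^ β)) hQ).trans hB)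
      rcases mul_eq_zero.mp h2 with h | h
      · exact absurd h hf
      · exact h
    intro d hd
    exact coeff_eq_zero_of_aeval_deriv β p (by rw [← hv]; exact hv0) d (Nat.lt_succ_iff.mp hd)
  · intro hp
    rw [Ideal.mem_span_singleton] at hp
    obtain ⟨c, rfl⟩ := hp
    refine ⟨X ^ (c.natDegree + 1), pow_ne_zero _ X_ne_zero, ?_⟩
    obtain ⟨Q, hQ⟩ := mem_Jb.mp (big_mem_Jb β c)
    refine ⟨Q, ?_⟩
    rw [map_natCast (algebraMap ℂ (Weyl 1)) β,
      mul_comm ((X : Polynomial ℂ) ^ (β + 1)) c, map_mul, map_pow, map_pow,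
      aeval_X, aeval_X]
    exact hQ.symm
end
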